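/- arXiv:2011.02895 — 2 statements merged into one kernel-verified Lean document; each statement's English description precedes it below -/
import Mathlib

section
/- Let (A, ≤_A), (A', ≤_{A'}), (B, ≤_B), (B', ≤_{B'}) be posets, and let ⪯_A (from A to A'), ⪯_B (from B to B'), ⪷ (from A' to B'), ⪯ (from A to B') and ⪌ (from A to B) all be weakening relations such that the relational compositions satisfy ⪯_A ; ⪷ ⊆ ⪯ (i.e. a ⪯_A a' and a' ⪷ b' imply a ⪯ b') and ⪌ ; ⪯_B ⊆ ⪯ (i.e. a ⪌ b and b ⪯_B b' imply a ⪯ b'). Then the relation ⸧ ⊆ (A ⊕ A') × (B ⊕ B') defined by: inl a ⸧ inl b iff a ⪌ b; inl a ⸧ inr b' iff a ⪯ b'; inr a' ⸧ inr b' iff a' ⪷ b'; and inr a' ⸧ inl b never holds, is a weakening relation from the collage order on A ⊕ A' induced by ⪯_A to the collage order on B ⊕ B' induced by ⪯_B. -/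
/-! A chain `x' ≤ x ⸧ y ≤ y'` never steps from a right summand back to a left one, so only five
cases remain: the three that stay inside one block are the weakening property of `⪌`, `⪯` or `⪷`,
and in the two that cross a block boundary the composition hypotheses turn the chain into one
for `⪯`. -/

/-- A weakening relation from an ordered set `(α, leA)` to an ordered set `(β, leB)`. -/
def IsWeakeningBetween {α β : Type*} (leA : α → α → Prop) (leB : β → β → Prop)
    (R : α → β → Prop) : Prop :=
  ∀ ⦃a' a b b'⦄, leA a' a → R a b → leB b b' → R a' b'

/-- The collage order on the disjoint union `A ⊕ B` induced by a relation `R : A → B`. -/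
def collage {A B : Type*} [LE A] [LE B] (R : A → B → Prop) :
    A ⊕ B → A ⊕ B → Prop
  | Sum.inl a, Sum.inl a' => a ≤ a'
  | Sum.inl a, Sum.inr b => R a b
  | Sum.inr b, Sum.inr b' => b ≤ b'
  | Sum.inr _, Sum.inl _ => False

/-- The collage of the relations `g : A → B`, `p : A → B'` and `q : A' → B'`, as a
relation from `A ⊕ A'` to `B ⊕ B'`. -/
def collageRel {A A' B B' : Type*} (g : A → B → Prop) (p : A → B' → Prop)
    (q : A' → B' → Prop) : A ⊕ A' → B ⊕ B' → Prop
  | Sum.inl a, Sum.inl b => g a b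
  | Sum.inl a, Sum.inr b' => p a b'
  | Sum.inr a', Sum.inr b' => q a' b'
  | Sum.inr _, Sum.inl _ => False

theorem IsWeakeningBetween.of_le_left {α β : Type*} {leA : α → α → Prop} [Preorder β]
    {R : α → β → Prop} (hR : IsWeakeningBetween leA (· ≤ ·) R) {a' a : α} {b : β}
    (ha : leA a' a) (h : R a b) : R a' b :=
  hR ha h le_rfl

theorem IsWeakeningBetween.of_le_right {α β : Type*} [Preorder α] {leB : β → β → Prop}
    {R : α → β → Prop} (hR : IsWeakeningBetween (· ≤ ·) leB R) {a : α} {b b' : β}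
    (h : R a b) (hb : leB b b') : R a b' :=
  hR le_rfl h hb

theorem stmt2_general {A A' B B' : Type*} [PartialOrder A] [PartialOrder A']
    [PartialOrder B] [PartialOrder B']
    (pA : A → A' → Prop) (pB : B → B' → Prop)
    (g : A → B → Prop) (p : A → B' → Prop) (q : A' → B' → Prop)
    (hg : IsWeakeningBetween (· ≤ ·) (· ≤ ·) g)
    (hp : IsWeakeningBetween (· ≤ ·) (· ≤ ·) p)
    (hq : IsWeakeningBetween (· ≤ ·) (· ≤ ·) q)
    (comp1 : ∀ ⦃a a' b'⦄, pA a a' → q a' b' → p a b')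
    (comp2 : ∀ ⦃a b b'⦄, g a b → pB b b' → p a b') :
    IsWeakeningBetween (collage pA) (collage pB) (collageRel g p q) := by
  rintro (a' | a') (a | a) (b | b) (b' | b') h₁ h₂ h₃ <;>
    simp only [collage, collageRel] at h₁ h₂ h₃ ⊢
  · exact hg h₁ h₂ h₃
  · exact hp.of_le_left h₁ (comp2 h₂ h₃)
  · exact hp h₁ h₂ h₃
  · exact hp.of_le_right (comp1 h₁ h₂) h₃
  · exact hq h₁ h₂ h₃

/-- Given weakening relations `pA : A → A'`, `pB : B → B'`, `q : A' → B'` (⪷),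
`p : A → B'` (⪯) and `g : A → B` (⪌) with `pA ; q ⊆ p` and `g ; pB ⊆ p`, the collage
of `g`, `p`, `q` is a weakening relation from the collage order on `A ⊕ A'` induced by
`pA` to the collage order on `B ⊕ B'` induced by `pB`. -/
theorem stmt2 {A A' B B' : Type*} [PartialOrder A] [PartialOrder A']
    [PartialOrder B] [PartialOrder B']
    (pA : A → A' → Prop) (pB : B → B' → Prop)
    (g : A → B → Prop) (p : A → B' → Prop) (q : A' → B' → Prop)
    (hpA : IsWeakeningBetween (· ≤ ·) (· ≤ ·) pA)
    (hpB : IsWeakeningBetween (· ≤ ·) (· ≤ ·) pB)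
    (hg : IsWeakeningBetween (· ≤ ·) (· ≤ ·) g)
    (hp : IsWeakeningBetween (· ≤ ·) (· ≤ ·) p)
    (hq : IsWeakeningBetween (· ≤ ·) (· ≤ ·) q)
    (comp1 : ∀ ⦃a a' b'⦄, pA a a' → q a' b' → p a b')
    (comp2 : ∀ ⦃a b b'⦄, g a b → pB b b' → p a b') :
    IsWeakeningBetween (collage pA) (collage pB) (collageRel g p q) :=
  stmt2_general pA pB g p q hg hp hq comp1 comp2
end

section
/- Given the shift data of a fully polarized LG-algebra, the relational composition of ⪌ followed by ⪅ᵇ equals ⪯: for all p ∈ P and n ∈ N, p ⪯ n holds if and only if there exists ṅ ∈ Ṅ such that p ⪌ ṅ and ṅ ⪅ᵇ n. -/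
/-- The shift data of a fully polarized LG-algebra: four posets `P`, `Ṗ` (`Pd`),
`N`, `Ṅ` (`Nd`), adjoint pairs of monotone shift maps `↑ ⊣ ⫞` and `↿ ⊣ ↓`, and
three weakening relations `⪌ʳ` (`gtr : P → Ṗ`), `⪯` (`prec : P → N`) and
`⪅ᵇ` (`lesb : Ṅ → N`) with `↑p ⪅ᵇ n ↔ p ⪯ n ↔ p ⪌ʳ ↓n`. -/
structure ShiftData (P Pd N Nd : Type*) [PartialOrder P] [PartialOrder Pd]
    [PartialOrder N] [PartialOrder Nd] where
  /-- `↑ : P → Ṅ` -/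
  up : P → Nd
  /-- `⫞ : Ṅ → P` -/
  corner : Nd → P
  /-- `↿ : Ṗ → N` -/
  upl : Pd → N
  /-- `↓ : N → Ṗ` -/
  down : N → Pd
  up_mono : Monotone up
  corner_mono : Monotone corner
  upl_mono : Monotone upl
  down_mono : Monotone down
  /-- the adjunction `↑ ⊣ ⫞` -/
  up_adj : ∀ (p : P) (nd : Nd), up p ≤ nd ↔ p ≤ corner nd
  /-- the adjunction `↿ ⊣ ↓` -/
  upl_adj : ∀ (pd : Pd) (n : N), upl pd ≤ n ↔ pd ≤ down n
  /-- `⪌ʳ : P → Ṗ` -/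
  gtr : P → Pd → Prop
  /-- `⪯ : P → N` -/
  prec : P → N → Prop
  /-- `⪅ᵇ : Ṅ → N` -/
  lesb : Nd → N → Prop
  gtr_wk : IsWeakeningBetween (· ≤ ·) (· ≤ ·) gtr
  prec_wk : IsWeakeningBetween (· ≤ ·) (· ≤ ·) prec
  lesb_wk : IsWeakeningBetween (· ≤ ·) (· ≤ ·) lesb
  /-- `↑p ⪅ᵇ n ↔ p ⪯ n` -/
  lesb_up_iff_prec : ∀ (p : P) (n : N), lesb (up p) n ↔ prec p n
  /-- `p ⪯ n ↔ p ⪌ʳ ↓n` -/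
  prec_iff_gtr_down : ∀ (p : P) (n : N), prec p n ↔ gtr p (down n)

variable {P Pd N Nd : Type*} [PartialOrder P] [PartialOrder Pd]
  [PartialOrder N] [PartialOrder Nd]

/-- The represented relation `⪌ : P → Ṅ`, `p ⪌ ṅ ↔ ↑p ⩿_Ṅ ṅ`. -/
def ShiftData.gles (S : ShiftData P Pd N Nd) (p : P) (nd : Nd) : Prop := S.up p ≤ nd

/-- The represented relation `⪷ : Ṗ → N`, `ṗ ⪷ n ↔ ṗ ⩿_Ṗ ↓n`. -/
def ShiftData.pres (S : ShiftData P Pd N Nd) (pd : Pd) (n : N) : Prop := pd ≤ S.down n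

theorem IsWeakeningBetween.exists_le_and_iff {α β : Type*} [Preorder α] [Preorder β]
    {R : α → β → Prop} (hR : IsWeakeningBetween (· ≤ ·) (· ≤ ·) R) (a : α) (b : β) :
    (∃ a', a ≤ a' ∧ R a' b) ↔ R a b :=
  ⟨fun ⟨_, ha, hab⟩ => hR ha hab le_rfl, fun hab => ⟨a, le_rfl, hab⟩⟩

/-- The relational composition of `⪌` followed by `⪅ᵇ` equals `⪯`. -/
theorem stmt4 (S : ShiftData P Pd N Nd) (p : P) (n : N) :
    S.prec p n ↔ ∃ nd : Nd, S.gles p nd ∧ S.lesb nd n :=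
  (S.lesb_up_iff_prec p n).symm.trans (S.lesb_wk.exists_le_and_iff (S.up p) n).symm
end
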